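/- arXiv:1204.4506 — 6 statements merged into one kernel-verified Lean document; each statement's English description precedes it below -/
import Mathlib

section
/- Let ω ∈ Ω_n. A linear operator T : K_n → K_n satisfies both (i) the Leibniz rule T(f·g)(x) = f(x) T g(x) + g(ω_{|x|−1}) T f(x) for all f, g ∈ K_n and x ∈ Q_n, and (ii) T f(x) = 0 whenever ω_{|x|} ≠ x, if and only if there exists a function β ∈ K_n such that T = β·△_ω, i.e. T f(x) = β(x)·△_ω f(x) for all f ∈ K_n and x ∈ Q_n. -/
attribute [local instance] Classical.propDecidable

/-- A pre-causet: a finite set `Fin card` endowed with an irreflexive,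
transitive (causal order) relation. -/
structure PreCauset where
  card : ℕ
  rel : Fin card → Fin card → Prop
  irrefl : ∀ a, ¬ rel a a
  trans : ∀ a b c, rel a b → rel b c → rel a c

/-- Order isomorphism of pre-causets. -/
def PreCauset.Iso (x y : PreCauset) : Prop :=
  ∃ e : Fin x.card ≃ Fin y.card, ∀ a b, x.rel a b ↔ y.rel (e a) (e b)

/-- `y` is produced from `x` (an offspring of `x`) if `y` is obtained from `x`
by adjoining a single new element that is maximal in `y`. -/
def PreCauset.Offspring (x y : PreCauset) : Prop :=
  y.card = x.card + 1 ∧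
    ∃ e : Fin x.card → Fin y.card, Function.Injective e ∧
      (∀ a b, x.rel a b ↔ y.rel (e a) (e b)) ∧
      (∀ c, c ∉ Set.range e → ∀ d, ¬ y.rel c d)

/-- A causal set (causet): a finite partially ordered set considered up to
order isomorphism. -/
def Causet : Type := Quot PreCauset.Iso

/-- The cardinality `|x|` of a causet. -/
def Causet.card : Causet → ℕ :=
  Quot.lift PreCauset.card fun _ _ h => by
    obtain ⟨e, -⟩ := h
    simpa using Fintype.card_congr e

/-- The offspring (production) relation `x → y` on causets. -/
def Causet.Offspring (x y : Causet) : Prop :=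
  ∃ a b : PreCauset, Quot.mk PreCauset.Iso a = x ∧ Quot.mk PreCauset.Iso b = y ∧
    a.Offspring b

/-- `Q n`: the collection of causets `x` with `1 ≤ |x| ≤ n`. -/
def Causet.Q (n : ℕ) : Type := {x : Causet // 1 ≤ x.card ∧ x.card ≤ n}

/-- The cardinality of an element of `Q n`. -/
def Causet.Q.card {n : ℕ} (x : Causet.Q n) : ℕ := x.val.card

/-- A path in `Q n`: a finite sequence `ω = ω₁ ω₂ ⋯ ωₙ` with `ω_j ∈ Q n`,
`|ω_j| = j` and `ω_j → ω_{j+1}` for `1 ≤ j ≤ n-1` (0-indexed internally). -/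
structure CausetPath (n : ℕ) where
  toFun : Fin n → Causet.Q n
  card_eq : ∀ j : Fin n, (toFun j).card = j.val + 1
  offspring : ∀ (j : ℕ) (h : j + 1 < n),
    Causet.Offspring (toFun ⟨j, Nat.lt_of_succ_lt h⟩).val (toFun ⟨j + 1, h⟩).val

/-- `ω.nth k` is `some ω_k` for `1 ≤ k ≤ n`, and `none` for the undefined
symbol `ω_0` (or any out-of-range index). -/
def CausetPath.nth {n : ℕ} (ω : CausetPath n) (k : ℕ) : Option (Causet.Q n) :=
  if h : 1 ≤ k ∧ k ≤ n then some (ω.toFun ⟨k - 1, by omega⟩) else none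

/-- Evaluation of `f ∈ K_n` with the convention `f(ω_0) := 0`. -/
def evalO {n : ℕ} (f : Causet.Q n → ℂ) : Option (Causet.Q n) → ℂ
  | some x => f x
  | none => 0

/-- Evaluation of `f ∈ L_n` with the convention that any term involving the
undefined symbols `ω_0` or `ω′_0` is `0`. -/
def evalO2 {n : ℕ} (f : Causet.Q n → Causet.Q n → ℂ) :
    Option (Causet.Q n) → Option (Causet.Q n) → ℂ
  | some x, some y => f x y
  | _, _ => 0

/-- The Kronecker delta `δ_{x, ω_{|x|}}`. -/
noncomputable def pathDelta {n : ℕ} (ω : CausetPath n) (x : Causet.Q n) : ℂ :=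
  if ω.nth x.card = some x then 1 else 0

/-- The difference operator `△_ω f (x) = [f(x) - f(ω_{|x|-1})] δ_{x, ω_{|x|}}`. -/
noncomputable def diffOp {n : ℕ} (ω : CausetPath n) (f : Causet.Q n → ℂ) :
    Causet.Q n → ℂ :=
  fun x => (f x - evalO f (ω.nth (x.card - 1))) * pathDelta ω x

/-- The bidifference operator
`△_{ω,ω′} f (x,y) = [f(x,y) - f(ω_{|x|-1}, ω′_{|y|-1})] δ_{x,ω_{|x|}} δ_{y,ω′_{|y|}}`. -/
noncomputable def bidiffOp {n : ℕ} (ω ω' : CausetPath n)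
    (f : Causet.Q n → Causet.Q n → ℂ) : Causet.Q n → Causet.Q n → ℂ :=
  fun x y =>
    (f x y - evalO2 f (ω.nth (x.card - 1)) (ω'.nth (y.card - 1))) *
      pathDelta ω x * pathDelta ω' y

/-- The Christoffel symbols `α_ω(x) = [μ(ω_{|x|-1}) - μ(x)] δ_{x, ω_{|x|}}`. -/
noncomputable def alphaOp {n : ℕ} (ω : CausetPath n) (μ : Causet.Q n → ℂ)
    (x : Causet.Q n) : ℂ :=
  (evalO μ (ω.nth (x.card - 1)) - μ x) * pathDelta ω x

/-- The covariant difference operator `∇_ω = μ △_ω + α_ω`. -/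
noncomputable def covDiffOp {n : ℕ} (ω : CausetPath n) (μ f : Causet.Q n → ℂ) :
    Causet.Q n → ℂ :=
  fun x => μ x * diffOp ω f x + alphaOp ω μ x * f x

/-- The Christoffel symbols
`α_{ω,ω′}(x,y) = [D(ω_{|x|-1}, ω′_{|y|-1}) - D(x,y)] δ_{x,ω_{|x|}} δ_{y,ω′_{|y|}}`. -/
noncomputable def alpha2Op {n : ℕ} (ω ω' : CausetPath n)
    (D : Causet.Q n → Causet.Q n → ℂ) (x y : Causet.Q n) : ℂ :=
  (evalO2 D (ω.nth (x.card - 1)) (ω'.nth (y.card - 1)) - D x y) *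
    pathDelta ω x * pathDelta ω' y

/-- The covariant bidifference operator `∇_{ω,ω′} = D △_{ω,ω′} + α_{ω,ω′}`. -/
noncomputable def covBidiffOp {n : ℕ} (ω ω' : CausetPath n)
    (D f : Causet.Q n → Causet.Q n → ℂ) : Causet.Q n → Causet.Q n → ℂ :=
  fun x y => D x y * bidiffOp ω ω' f x y + alpha2Op ω ω' D x y * f x y

/-- The curvature operator `R_{ω,ω′} = ∇_{ω,ω′} - ∇_{ω′,ω}`. -/
noncomputable def curvOp {n : ℕ} (ω ω' : CausetPath n)
    (D f : Causet.Q n → Causet.Q n → ℂ) : Causet.Q n → Causet.Q n → ℂ :=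
  fun x y => covBidiffOp ω ω' D f x y - covBidiffOp ω' ω D f x y

/-- The metric operator `𝒟_{ω,ω′}`. -/
noncomputable def metricOp {n : ℕ} (ω ω' : CausetPath n)
    (D f : Causet.Q n → Causet.Q n → ℂ) : Causet.Q n → Causet.Q n → ℂ :=
  fun x y =>
    D x y *
      (evalO2 f (ω'.nth (x.card - 1)) (ω.nth (y.card - 1)) *
          pathDelta ω' x * pathDelta ω y -
        evalO2 f (ω.nth (x.card - 1)) (ω'.nth (y.card - 1)) *
          pathDelta ω x * pathDelta ω' y)

/-- The mass-energy operator `𝒯_{ω,ω′}`. -/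
noncomputable def massOp {n : ℕ} (ω ω' : CausetPath n)
    (D f : Causet.Q n → Causet.Q n → ℂ) : Causet.Q n → Causet.Q n → ℂ :=
  fun x y =>
    (evalO2 D (ω.nth (x.card - 1)) (ω'.nth (y.card - 1)) *
        pathDelta ω x * pathDelta ω' y -
      evalO2 D (ω'.nth (x.card - 1)) (ω.nth (y.card - 1)) *
        pathDelta ω' x * pathDelta ω y) * f x y

/-- The standard inner product on `K_n = ℂ^{Q_n}`. -/
noncomputable def Kinner {n : ℕ} [Fintype (Causet.Q n)]
    (f g : Causet.Q n → ℂ) : ℂ :=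
  ∑ x, (starRingEnd ℂ) (f x) * g x

/-- The standard inner product on `L_n = ℂ^{Q_n × Q_n}`. -/
noncomputable def Linner {n : ℕ} [Fintype (Causet.Q n)]
    (f g : Causet.Q n → Causet.Q n → ℂ) : ℂ :=
  ∑ x, ∑ y, (starRingEnd ℂ) (f x y) * g x y

/-- The standard basis vector `e_x` (with the convention `e_{ω_0} := 0`). -/
noncomputable def basisO {n : ℕ} : Option (Causet.Q n) → (Causet.Q n → ℂ)
  | some x => fun y => if y = x then 1 else 0
  | none => 0

/-- The tensor product basis vector `e_x ⊗ e_y` (with the convention that any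
factor involving `ω_0` or `ω′_0` is `0`). -/
noncomputable def basisO2 {n : ℕ} (o o' : Option (Causet.Q n)) :
    Causet.Q n → Causet.Q n → ℂ :=
  fun x y => basisO o x * basisO o' y
/-- a linear operator `T : K_n → K_n` satisfies the Leibniz rule
and vanishes off the path iff `T = β·△_ω` for some `β ∈ K_n`. -/
theorem diffOp_multiple_characterization {n : ℕ} (ω : CausetPath n)
    (T : (Causet.Q n → ℂ) →ₗ[ℂ] (Causet.Q n → ℂ)) :
    ((∀ (f g : Causet.Q n → ℂ) (x : Causet.Q n),
        T (f * g) x = f x * T g x + evalO g (ω.nth (x.card - 1)) * T f x) ∧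
      (∀ (f : Causet.Q n → ℂ) (x : Causet.Q n),
        ω.nth x.card ≠ some x → T f x = 0)) ↔
      ∃ β : Causet.Q n → ℂ,
        ∀ (f : Causet.Q n → ℂ) (x : Causet.Q n),
          T f x = β x * diffOp ω f x := by
  constructor
  · rintro ⟨hL, hV⟩
    refine ⟨fun x => T (fun y => if y = x then 1 else 0) x, fun f x => ?_⟩
    by_cases hx : ω.nth x.card = some x
    · have hdf : (fun y => if y = x then (1:ℂ) else 0) * f
          = f x • (fun y => if y = x then (1:ℂ) else 0) := by
        funext y
        by_cases hy : y = x <;> simp [hy, mul_comm]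
      have key := hL (fun y => if y = x then (1:ℂ) else 0) f x
      rw [hdf, map_smul] at key
      simp only [Pi.smul_apply, smul_eq_mul] at key
      rw [if_pos trivial, one_mul] at key
      simp only [diffOp, pathDelta, if_pos hx, mul_one]
      linear_combination -key
    · rw [hV f x hx]
      simp [diffOp, pathDelta, hx]
  · rintro ⟨β, hβ⟩
    constructor
    · intro f g x
      simp only [hβ, diffOp]
      have h : evalO (f * g) (ω.nth (x.card - 1))
          = evalO f (ω.nth (x.card - 1)) * evalO g (ω.nth (x.card - 1)) := by
        cases ω.nth (x.card - 1) <;> simp [evalO]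
      rw [h, Pi.mul_apply]; ring
    · intro f x hx
      rw [hβ]
      simp [diffOp, pathDelta, hx]
end

section
/- Let ω, ω′ ∈ Ω_n. A linear operator T : L_n → L_n satisfies both (i) the Leibniz rule T(f·g)(x,y) = f(x,y) T g(x,y) + g(ω_{|x|−1}, ω′_{|y|−1}) T f(x,y) for all f, g ∈ L_n and x, y ∈ Q_n, and (ii) T f(x,y) = 0 whenever ω_{|x|} ≠ x or ω′_{|y|} ≠ y, if and only if there exists a function β ∈ L_n such that T = β·△_{ω,ω′}, i.e. T f(x,y) = β(x,y)·△_{ω,ω′} f(x,y) for all f ∈ L_n and x, y ∈ Q_n. -/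
attribute [local instance] Classical.propDecidable

/- At a point `(x, y)` on the pair of paths, `f ↦ T f x y` obeys a twisted Leibniz rule; comparing
it with the rule for `g * f` pins it down as `T f x y = (f x y - f(ω_{|x|-1}, ω′_{|y|-1})) · β x y`,
with `β x y` the value of `T` on the indicator of `(x, y)`; the indicator vanishes at the predecessor
pair because its cardinalities are one smaller. Conversely `△_{ω,ω′}` itself obeys the rule. -/

section Leibniz

variable {A K : Type*} [CommMagma A] [CommRing K] {φ u v : A → K}

theorem sub_mul_eq_sub_mul_of_leibniz (hφ : ∀ f g, φ (f * g) = u f * φ g + v g * φ f)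
    (f g : A) : (u f - v f) * φ g = (u g - v g) * φ f := by
  have h := hφ f g
  rw [mul_comm f g, hφ g f] at h
  linear_combination h.symm

theorem eq_sub_mul_of_leibniz (hφ : ∀ f g, φ (f * g) = u f * φ g + v g * φ f)
    {e : A} (hue : u e = 1) (hve : v e = 0) (f : A) : φ f = (u f - v f) * φ e := by
  simpa [hue, hve] using sub_mul_eq_sub_mul_of_leibniz hφ e f

end Leibniz

theorem CausetPath.card_of_nth_eq_some {n : ℕ} (ω : CausetPath n) {k : ℕ} {p : Causet.Q n}
    (h : ω.nth k = some p) : p.card = k := by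
  unfold CausetPath.nth at h
  split_ifs at h with hk
  rw [← Option.some_inj.mp h, ω.card_eq]
  simp only
  omega

theorem CausetPath.nth_card_sub_one_ne {n : ℕ} (ω : CausetPath n) (x : Causet.Q n) :
    ω.nth (x.card - 1) ≠ some x := fun h => by
  have := ω.card_of_nth_eq_some h
  have : 1 ≤ x.card := x.2.1
  omega

theorem evalO2_mul {n : ℕ} (f g : Causet.Q n → Causet.Q n → ℂ) (o o' : Option (Causet.Q n)) :
    evalO2 (f * g) o o' = evalO2 f o o' * evalO2 g o o' := by
  cases o <;> cases o' <;> simp [evalO2]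

theorem evalO2_single_nth_card_sub_one {n : ℕ} (ω ω' : CausetPath n) (x y : Causet.Q n) :
    evalO2 (Pi.single x (Pi.single y 1)) (ω.nth (x.card - 1)) (ω'.nth (y.card - 1)) = 0 := by
  cases h : ω.nth (x.card - 1) with
  | none => rfl
  | some p =>
    cases ω'.nth (y.card - 1) with
    | none => rfl
    | some q =>
      have hpx : p ≠ x := fun hpx => ω.nth_card_sub_one_ne x (hpx ▸ h)
      simp [evalO2, Pi.single_eq_of_ne hpx]

section bidiffOp

variable {n : ℕ} (ω ω' : CausetPath n) (f g : Causet.Q n → Causet.Q n → ℂ) (x y : Causet.Q n)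

theorem bidiffOp_mul :
    bidiffOp ω ω' (f * g) x y =
      f x y * bidiffOp ω ω' g x y +
        evalO2 g (ω.nth (x.card - 1)) (ω'.nth (y.card - 1)) * bidiffOp ω ω' f x y := by
  simp only [bidiffOp, evalO2_mul, Pi.mul_apply]
  ring

variable {ω ω' x y}

theorem bidiffOp_of_nth_card_eq (hx : ω.nth x.card = some x) (hy : ω'.nth y.card = some y) :
    bidiffOp ω ω' f x y = f x y - evalO2 f (ω.nth (x.card - 1)) (ω'.nth (y.card - 1)) := by
  simp [bidiffOp, pathDelta, hx, hy]

theorem bidiffOp_eq_zero (h : ω.nth x.card ≠ some x ∨ ω'.nth y.card ≠ some y) :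
    bidiffOp ω ω' f x y = 0 := by
  rcases h with h | h <;> simp [bidiffOp, pathDelta, h]

end bidiffOp

/-- a linear operator `T : L_n → L_n` satisfies the Leibniz rule
and vanishes off the pair of paths iff `T = β·△_{ω,ω′}` for some `β ∈ L_n`. -/
theorem bidiffOp_multiple_characterization {n : ℕ} (ω ω' : CausetPath n)
    (T : (Causet.Q n → Causet.Q n → ℂ) →ₗ[ℂ] (Causet.Q n → Causet.Q n → ℂ)) :
    ((∀ (f g : Causet.Q n → Causet.Q n → ℂ) (x y : Causet.Q n),
        T (f * g) x y =
          f x y * T g x y +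
            evalO2 g (ω.nth (x.card - 1)) (ω'.nth (y.card - 1)) * T f x y) ∧
      (∀ (f : Causet.Q n → Causet.Q n → ℂ) (x y : Causet.Q n),
        ω.nth x.card ≠ some x ∨ ω'.nth y.card ≠ some y → T f x y = 0)) ↔
      ∃ β : Causet.Q n → Causet.Q n → ℂ,
        ∀ (f : Causet.Q n → Causet.Q n → ℂ) (x y : Causet.Q n),
          T f x y = β x y * bidiffOp ω ω' f x y := by
  constructor
  · rintro ⟨hLeibniz, hVanish⟩
    refine ⟨fun x y => T (Pi.single x (Pi.single y 1)) x y, fun f x y => ?_⟩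
    by_cases h : ω.nth x.card = some x ∧ ω'.nth y.card = some y
    · rw [bidiffOp_of_nth_card_eq f h.1 h.2, mul_comm]
      exact eq_sub_mul_of_leibniz (φ := fun f => T f x y) (hLeibniz · · x y) (by simp)
        (evalO2_single_nth_card_sub_one ω ω' x y) f
    · rw [not_and_or] at h
      rw [hVanish f x y h, bidiffOp_eq_zero f h, mul_zero]
  · rintro ⟨β, hβ⟩
    refine ⟨fun f g x y => ?_, fun f x y h => ?_⟩
    · simp only [hβ, bidiffOp_mul]
      ring
    · rw [hβ, bidiffOp_eq_zero f h, mul_zero]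
end

section
/- Let ω ∈ Ω_n and let μ, α, β ∈ K_n satisfy β(x)[μ(x) − μ(ω_{|x|−1})] δ_{x, ω_{|x|}} + α(x) μ(x) = 0 for all x ∈ Q_n (with μ(ω_0) := 0). If for some k with 1 ≤ k ≤ n one has μ(ω_k) = 0 and β(ω_j) ≠ 0 for all 2 ≤ j ≤ k, then μ(ω_j) = 0 for all 1 ≤ j ≤ k. In particular, if β vanishes nowhere on the path and μ(ω_1) ≠ 0, then μ(ω_k) ≠ 0 for every k; hence any β ∈ K_n for which such an α can exist for arbitrary μ must satisfy β(x) = 0 whenever μ(x) = 0. -/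
attribute [local instance] Classical.propDecidable

/-! Along the path the equation is a recurrence for `k ↦ f(ω_k)` (with `f(ω_0) = 0` built into
`evalO`): `β(ω_k)(μ(ω_k) - μ(ω_{k-1})) + α(ω_k) μ(ω_k) = 0`. So a zero of `μ` at `ω_k` with
`β(ω_k) ≠ 0` forces a zero at `ω_{k-1}`. Taking for `μ` the indicator of `ω_{k-1}`, the
recurrence at `ω_k` reduces to `-β(ω_k) = 0`. -/

theorem zero_propagates_backward {R : Type*} [CommRing R] [NoZeroDivisors R] {a b c : ℕ → R}
    {m : ℕ} (h : ∀ k, 2 ≤ k → k ≤ m → b k * (a k - a (k - 1)) + c k * a k = 0)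
    (hb : ∀ k, 2 ≤ k → k ≤ m → b k ≠ 0) (ha : a m = 0) :
    ∀ j, 1 ≤ j → j ≤ m → a j = 0 := by
  intro j hj1 hjm
  induction hjm using Nat.decreasingInduction with
  | self => exact ha
  | of_succ k hkm ih =>
    have hk : b (k + 1) * (a (k + 1) - a k) + c (k + 1) * a (k + 1) = 0 :=
      h (k + 1) (by omega) hkm
    rw [ih (by omega), zero_sub, mul_zero, add_zero, mul_neg, neg_eq_zero] at hk
    exact (mul_eq_zero.mp hk).resolve_left (hb (k + 1) (by omega) hkm)

namespace CausetPath

variable {n : ℕ} (ω : CausetPath n)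

theorem toFun_injective : Function.Injective ω.toFun := fun i j hij => by
  have := ω.card_eq i
  rw [hij, ω.card_eq j] at this
  exact Fin.ext (by omega)

theorem nth_of_le {k : ℕ} (hk1 : 1 ≤ k) (hkn : k ≤ n) :
    ω.nth k = some (ω.toFun ⟨k - 1, Nat.sub_one_lt_of_le hk1 hkn⟩) := dif_pos ⟨hk1, hkn⟩

theorem evalO_nth (f : Causet.Q n → ℂ) {k : ℕ} (hk1 : 1 ≤ k) (hkn : k ≤ n) :
    evalO f (ω.nth k) = f (ω.toFun ⟨k - 1, Nat.sub_one_lt_of_le hk1 hkn⟩) := by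
  rw [ω.nth_of_le hk1 hkn, evalO]

theorem pathDelta_toFun (i : Fin n) : pathDelta ω (ω.toFun i) = 1 := by
  have hi : ω.nth (ω.toFun i).card = some (ω.toFun i) := by
    rw [ω.card_eq, ω.nth_of_le (by omega) (by omega)]
    rfl
  rw [pathDelta, if_pos hi]

theorem nth_recurrence {μ α β : Causet.Q n → ℂ}
    (H : ∀ x : Causet.Q n,
      β x * (μ x - evalO μ (ω.nth (x.card - 1))) * pathDelta ω x + α x * μ x = 0)
    {k : ℕ} (hk1 : 1 ≤ k) (hkn : k ≤ n) :
    evalO β (ω.nth k) * (evalO μ (ω.nth k) - evalO μ (ω.nth (k - 1))) +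
      evalO α (ω.nth k) * evalO μ (ω.nth k) = 0 := by
  have hx := H (ω.toFun ⟨k - 1, Nat.sub_one_lt_of_le hk1 hkn⟩)
  rw [ω.pathDelta_toFun, mul_one, ω.card_eq, Nat.sub_add_cancel hk1] at hx
  simpa only [ω.evalO_nth _ hk1 hkn] using hx

theorem eq_zero_of_le_of_eq_zero {μ α β : Causet.Q n → ℂ}
    (H : ∀ x : Causet.Q n,
      β x * (μ x - evalO μ (ω.nth (x.card - 1))) * pathDelta ω x + α x * μ x = 0)
    {k : ℕ} (hk1 : 1 ≤ k) (hkn : k ≤ n)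
    (hμk : μ (ω.toFun ⟨k - 1, Nat.sub_one_lt_of_le hk1 hkn⟩) = 0)
    (hβ : ∀ j (hj2 : 2 ≤ j) (hjk : j ≤ k),
      β (ω.toFun ⟨j - 1, Nat.sub_one_lt_of_le (one_le_two.trans hj2) (hjk.trans hkn)⟩) ≠ 0)
    {j : ℕ} (hj1 : 1 ≤ j) (hjk : j ≤ k) :
    μ (ω.toFun ⟨j - 1, Nat.sub_one_lt_of_le hj1 (hjk.trans hkn)⟩) = 0 := by
  rw [← ω.evalO_nth μ hj1 (hjk.trans hkn)]
  refine zero_propagates_backward (a := fun i => evalO μ (ω.nth i))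
    (b := fun i => evalO β (ω.nth i)) (c := fun i => evalO α (ω.nth i))
    (fun i hi2 hik => ω.nth_recurrence H (by omega) (hik.trans hkn))
    (fun i hi2 hik => ?_) ?_ j hj1 hjk
  · rw [ω.evalO_nth β (by omega) (hik.trans hkn)]
    exact hβ i hi2 hik
  · rwa [ω.evalO_nth μ hk1 hkn]

theorem eq_zero_of_forall_exists_solution {β : Causet.Q n → ℂ}
    (hex : ∀ μ : Causet.Q n → ℂ, ∃ α : Causet.Q n → ℂ, ∀ x : Causet.Q n,
      β x * (μ x - evalO μ (ω.nth (x.card - 1))) * pathDelta ω x + α x * μ x = 0)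
    {k : ℕ} (hk2 : 2 ≤ k) (hkn : k ≤ n) :
    β (ω.toFun ⟨k - 1, Nat.sub_one_lt_of_le (one_le_two.trans hk2) hkn⟩) = 0 := by
  obtain ⟨α, hα⟩ := hex (basisO (ω.nth (k - 1)))
  have hk := ω.nth_recurrence hα (by omega) hkn
  have hne : ω.toFun ⟨k - 1, by omega⟩ ≠ ω.toFun ⟨k - 1 - 1, by omega⟩ :=
    fun h => by have := Fin.mk.inj_iff.mp (ω.toFun_injective h); omega
  rw [ω.nth_of_le (by omega) hkn, ω.nth_of_le (by omega) (by omega)] at hk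
  simpa [evalO, basisO, hne] using hk

end CausetPath

/-- propagation of zeros of `μ` along the path for the equation
`β(x)[μ(x) - μ(ω_{|x|-1})] δ_{x,ω_{|x|}} + α(x) μ(x) = 0`, the resulting
nonvanishing of `μ` on the path, and the consequence that `β` must vanish
where `μ` vanishes (at path points) if such an `α` exists for arbitrary `μ`. -/
theorem mu_zero_propagation {n : ℕ} (hn : 1 ≤ n) (ω : CausetPath n)
    (μ α β : Causet.Q n → ℂ)
    (H : ∀ x : Causet.Q n,
      β x * (μ x - evalO μ (ω.nth (x.card - 1))) * pathDelta ω x +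
        α x * μ x = 0) :
    (∀ (k : ℕ) (hk1 : 1 ≤ k) (hkn : k ≤ n),
      μ (ω.toFun ⟨k - 1, by omega⟩) = 0 →
      (∀ (j : ℕ) (hj2 : 2 ≤ j) (hjk : j ≤ k), β (ω.toFun ⟨j - 1, by omega⟩) ≠ 0) →
      ∀ (j : ℕ) (hj1 : 1 ≤ j) (hjk : j ≤ k), μ (ω.toFun ⟨j - 1, by omega⟩) = 0) ∧
    ((∀ (j : ℕ) (hj1 : 1 ≤ j) (hjn : j ≤ n), β (ω.toFun ⟨j - 1, by omega⟩) ≠ 0) →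
      μ (ω.toFun ⟨0, by omega⟩) ≠ 0 →
      ∀ (k : ℕ) (hk1 : 1 ≤ k) (hkn : k ≤ n), μ (ω.toFun ⟨k - 1, by omega⟩) ≠ 0) ∧
    (∀ (k : ℕ) (hk2 : 2 ≤ k) (hkn : k ≤ n),
      (∀ μ' : Causet.Q n → ℂ, ∃ α' : Causet.Q n → ℂ,
        ∀ x : Causet.Q n,
          β x * (μ' x - evalO μ' (ω.nth (x.card - 1))) * pathDelta ω x +
            α' x * μ' x = 0) →
      μ (ω.toFun ⟨k - 1, by omega⟩) = 0 → β (ω.toFun ⟨k - 1, by omega⟩) = 0) := by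
  refine ⟨fun _ hk1 hkn hμk hβ _ => ω.eq_zero_of_le_of_eq_zero H hk1 hkn hμk hβ, ?_,
    fun _ hk2 hkn hex _ => ω.eq_zero_of_forall_exists_solution hex hk2 hkn⟩
  intro hβ hμ1 k hk1 hkn hμk
  exact hμ1 (ω.eq_zero_of_le_of_eq_zero H hk1 hkn hμk
    (fun j _ hjk => hβ j (by omega) (hjk.trans hkn)) le_rfl hk1)
end

section
/- For all paths ω, ω′ ∈ Ω_n, every f ∈ L_n and all x, y ∈ Q_n, the curvature operator satisfies R_{ω,ω′} f(x,y) = D(x,y)[f(ω′_{|x|−1}, ω_{|y|−1}) δ_{x, ω′_{|x|}} δ_{y, ω_{|y|}} − f(ω_{|x|−1}, ω′_{|y|−1}) δ_{x, ω_{|x|}} δ_{y, ω′_{|y|}}] + [D(ω_{|x|−1}, ω′_{|y|−1}) δ_{x, ω_{|x|}} δ_{y, ω′_{|y|}} − D(ω′_{|x|−1}, ω_{|y|−1}) δ_{x, ω′_{|x|}} δ_{y, ω_{|y|}}] f(x,y). -/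
attribute [local instance] Classical.propDecidable

/-- the explicit formula for the curvature operator
`R_{ω,ω′} = ∇_{ω,ω′} - ∇_{ω′,ω}`. -/
theorem curvOp_formula {n : ℕ} (ω ω' : CausetPath n)
    (D f : Causet.Q n → Causet.Q n → ℂ) (x y : Causet.Q n) :
    curvOp ω ω' D f x y =
      D x y *
        (evalO2 f (ω'.nth (x.card - 1)) (ω.nth (y.card - 1)) *
            pathDelta ω' x * pathDelta ω y -
          evalO2 f (ω.nth (x.card - 1)) (ω'.nth (y.card - 1)) *
            pathDelta ω x * pathDelta ω' y) +
      (evalO2 D (ω.nth (x.card - 1)) (ω'.nth (y.card - 1)) *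
          pathDelta ω x * pathDelta ω' y -
        evalO2 D (ω'.nth (x.card - 1)) (ω.nth (y.card - 1)) *
          pathDelta ω' x * pathDelta ω y) * f x y := by
  simp only [curvOp, covBidiffOp, bidiffOp, alpha2Op]
  ring
end

section
/- For all paths ω, ω′ ∈ Ω_n, the curvature operator decomposes as R_{ω,ω′} = 𝒟_{ω,ω′} + 𝒯_{ω,ω′}, the sum of the metric operator and the mass-energy operator (a discrete analogue of Einstein's equation). -/
attribute [local instance] Classical.propDecidable

/-- the discrete Einstein equation: the curvature operator
decomposes as `R_{ω,ω′} = 𝒟_{ω,ω′} + 𝒯_{ω,ω′}`, the sum of the metric operator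
and the mass-energy operator. -/
theorem discrete_einstein_equation {n : ℕ} (ω ω' : CausetPath n)
    (D : Causet.Q n → Causet.Q n → ℂ) (f : Causet.Q n → Causet.Q n → ℂ) :
    curvOp ω ω' D f = metricOp ω ω' D f + massOp ω ω' D f := by
  funext x y
  simp only [curvOp, covBidiffOp, bidiffOp, alpha2Op, metricOp, massOp, Pi.add_apply]
  ring
end

section
/- Suppose the decoherence matrix D is Hermitian, i.e. D(x,y) = conj(D(y,x)) for all x, y ∈ Q_n, and set μ(x) = D(x,x). Then for all paths ω, ω′ ∈ Ω_n, every f ∈ L_n and every x ∈ Q_n, the curvature operator on the diagonal satisfies R_{ω,ω′} f(x,x) = μ(x)[f(ω′_{|x|−1}, ω_{|x|−1}) − f(ω_{|x|−1}, ω′_{|x|−1})] δ_{x, ω_{|x|}} δ_{x, ω′_{|x|}} + 2i·Im(D(ω_{|x|−1}, ω′_{|x|−1})) f(x,x) δ_{x, ω_{|x|}} δ_{x, ω′_{|x|}}. -/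
attribute [local instance] Classical.propDecidable

/-- for Hermitian `D`, the curvature operator on the diagonal
satisfies `R_{ω,ω′} f(x,x) = μ(x)[f(ω′_{|x|-1},ω_{|x|-1}) - f(ω_{|x|-1},ω′_{|x|-1})]
δ_{x,ω_{|x|}} δ_{x,ω′_{|x|}} + 2i·Im D(ω_{|x|-1},ω′_{|x|-1}) f(x,x)
δ_{x,ω_{|x|}} δ_{x,ω′_{|x|}}` where `μ(x) = D(x,x)`. -/
theorem curvOp_diag {n : ℕ} (D : Causet.Q n → Causet.Q n → ℂ)
    (hD : ∀ x y : Causet.Q n, D x y = (starRingEnd ℂ) (D y x))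
    (ω ω' : CausetPath n) (f : Causet.Q n → Causet.Q n → ℂ) (x : Causet.Q n) :
    curvOp ω ω' D f x x =
      D x x *
        (evalO2 f (ω'.nth (x.card - 1)) (ω.nth (x.card - 1)) -
          evalO2 f (ω.nth (x.card - 1)) (ω'.nth (x.card - 1))) *
        pathDelta ω x * pathDelta ω' x +
      2 * Complex.I *
        ((evalO2 D (ω.nth (x.card - 1)) (ω'.nth (x.card - 1))).im : ℂ) *
        f x x * pathDelta ω x * pathDelta ω' x := by
  have hswap : evalO2 D (ω'.nth (x.card-1)) (ω.nth (x.card-1)) =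
      (starRingEnd ℂ) (evalO2 D (ω.nth (x.card-1)) (ω'.nth (x.card-1))) := by
    cases ω.nth (x.card-1) <;> cases ω'.nth (x.card-1) <;>
      simp only [evalO2, map_zero] <;> first | rfl | exact hD _ _
  simp only [curvOp, covBidiffOp, bidiffOp, alpha2Op, hswap]
  set d := evalO2 D (ω.nth (x.card-1)) (ω'.nth (x.card-1)) with hd
  have h2 : d - (starRingEnd ℂ) d = 2 * Complex.I * (d.im : ℂ) := by
    rw [Complex.sub_conj]; push_cast; ring
  linear_combination (f x x * pathDelta ω x * pathDelta ω' x) * h2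
end
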